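/- Let Y be a discrete random variable and S a finite set of discrete random variables with Y ∉ S, and let E ⊆ S be the set of essential variables for Y. Then Y has a unique Markov boundary within S if and only if E is a Markov boundary of Y within S (equivalently, if and only if Y ⊥ (S \ E) | E). -/

import Mathlib

/-!
A variable `W ∈ S` is essential iff it lies in every Markov blanket of `Y` within `S`: weak union
turns `Y ⊥ (S \ M) | M` with `W ∉ M` into `Y ⊥ W | S \ {W}`, and conversely, for a non-essential
`W` the set `S \ {W}` is itself a blanket. So `E` is the intersection of all blankets, and a
family of finite sets has a unique minimal member iff it contains its intersection, since every
member contains a minimal one.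
-/

open scoped BigOperators

noncomputable section

/-- `p` is a probability mass function on the finite type `Ω`. -/
def IsDist {Ω : Type*} [Fintype Ω] (p : Ω → ℝ) : Prop :=
  (∀ w, 0 ≤ p w) ∧ ∑ w, p w = 1

/-- Total variation distance between two distributions on the same finite type. -/
def tvDist {Ω : Type*} [Fintype Ω] (p q : Ω → ℝ) : ℝ :=
  (∑ w, |p w - q w|) / 2

variable {ι : Type*} [Fintype ι] [DecidableEq ι]
variable {α : ι → Type*} [∀ i, Fintype (α i)] [∀ i, DecidableEq (α i)]

/-- Marginal probability, under joint pmf `p`, of the event that the variables in the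
collection `A` take the values prescribed by the configuration `x`. -/
def margProb (p : (∀ i, α i) → ℝ) (A : Finset ι) (x : ∀ i, α i) : ℝ :=
  ∑ w : ∀ i, α i, if ∀ i ∈ A, w i = x i then p w else 0

/-- Conditional independence of the collections `A` and `B` given the collection `C`:
`f(a, b | c) = f(a | c) f(b | c)` whenever `f(c) > 0` (stated in multiplied-out form). -/
def CondIndep (p : (∀ i, α i) → ℝ) (A B C : Finset ι) : Prop :=
  ∀ x : ∀ i, α i, 0 < margProb p C x →
    margProb p (A ∪ B ∪ C) x * margProb p C x =
      margProb p (A ∪ C) x * margProb p (B ∪ C) x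

/-- `M` is a Markov blanket of the variable `y` within the collection `T`. -/
def MarkovBlanket (p : (∀ i, α i) → ℝ) (y : ι) (T M : Finset ι) : Prop :=
  M ⊆ T ∧ CondIndep p {y} (T \ M) M

/-- `M` is a Markov boundary of `y` within `T`: a Markov blanket no proper subset of
which is a Markov blanket. -/
def MarkovBoundary (p : (∀ i, α i) → ℝ) (y : ι) (T M : Finset ι) : Prop :=
  MarkovBlanket p y T M ∧ ∀ M' ⊂ M, ¬ MarkovBlanket p y T M'

/-- Mutual information between the collections `A` and `B`
(with the convention `0 · log(junk) = 0` on zero-probability terms). -/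
def MI (p : (∀ i, α i) → ℝ) (A B : Finset ι) : ℝ :=
  ∑ w : ∀ i, α i, p w *
    Real.log (margProb p (A ∪ B) w / (margProb p A w * margProb p B w))

/-- Conditional mutual information between collections `A` and `B` given `C`
(with the convention `0 · log(junk) = 0` on zero-probability terms). -/
def CMI (p : (∀ i, α i) → ℝ) (A B C : Finset ι) : ℝ :=
  ∑ w : (∀ i, α i), p w *
    Real.log ((margProb p (A ∪ B ∪ C) w * margProb p C w) /
      (margProb p (A ∪ C) w * margProb p (B ∪ C) w))

section Intersection

variable {β : Type*} {P : Finset β → Prop} {I : Finset β}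

theorem minimal_iff_of_mem_iff_forall_mem (hI : ∀ a, a ∈ I ↔ ∀ M, P M → a ∈ M) :
    Minimal P I ↔ P I :=
  ⟨Minimal.prop, fun h => ⟨h, fun M hM _ a ha => (hI a).1 ha M hM⟩⟩

theorem existsUnique_minimal_iff_of_mem_iff_forall_mem
    (hI : ∀ a, a ∈ I ↔ ∀ M, P M → a ∈ M) : (∃! M, Minimal P M) ↔ P I := by
  have hI_le : ∀ M, P M → I ≤ M := fun M hM a ha => (hI a).1 ha M hM
  refine ⟨?_, fun h => ⟨I, (minimal_iff_of_mem_iff_forall_mem hI).2 h,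
    fun M hM => (hM.eq_of_le h (hI_le M hM.prop)).symm⟩⟩
  rintro ⟨M, hM, huniq⟩
  suffices M = I from this ▸ hM.prop
  refine le_antisymm (fun a haM => (hI a).2 fun N hN => ?_) (hI_le M hM.prop)
  obtain ⟨N', hN'N, hN'⟩ := exists_minimal_le_of_wellFoundedLT P N hN
  exact hN'N (huniq N' hN' ▸ haM)

end Intersection

section MargProb

variable {p : (∀ i, α i) → ℝ}

theorem margProb_nonneg (hp : ∀ w, 0 ≤ p w) (A : Finset ι) (x : ∀ i, α i) :
    0 ≤ margProb p A x :=
  Finset.sum_nonneg fun w _ => by split <;> simp [hp w]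

theorem margProb_anti (hp : ∀ w, 0 ≤ p w) {A B : Finset ι} (hAB : A ⊆ B) (x : ∀ i, α i) :
    margProb p B x ≤ margProb p A x := by
  refine Finset.sum_le_sum fun w _ => ?_
  by_cases h : ∀ i ∈ B, w i = x i
  · rw [if_pos h, if_pos fun i hi => h i (hAB hi)]
  · rw [if_neg h]; split <;> simp [hp w]

theorem margProb_update_of_notMem {A : Finset ι} {j : ι} (hj : j ∉ A) (x : ∀ i, α i) (v : α j) :
    margProb p A (Function.update x j v) = margProb p A x := by
  refine Finset.sum_congr rfl fun w _ => if_congr (forall₂_congr fun i hi => ?_) rfl rfl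
  rw [Function.update_of_ne (ne_of_mem_of_not_mem hi hj)]

theorem margProb_eq_sum_insert {A : Finset ι} {j : ι} (hj : j ∉ A) (x : ∀ i, α i) :
    margProb p A x = ∑ v : α j, margProb p (insert j A) (Function.update x j v) := by
  unfold margProb
  rw [Finset.sum_comm]
  refine Finset.sum_congr rfl fun w _ => ?_
  have hmem : ∀ v : α j, (∀ i ∈ insert j A, w i = Function.update x j v i) ↔
      (v = w j ∧ ∀ i ∈ A, w i = x i) := fun v => by
    rw [Finset.forall_mem_insert, Function.update_self, eq_comm]
    refine and_congr_right fun _ => forall₂_congr fun i hi => ?_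
    rw [Function.update_of_ne (ne_of_mem_of_not_mem hi hj)]
  simp_rw [hmem, ite_and, Finset.sum_ite_eq', Finset.mem_univ, if_true]

end MargProb

section CondIndep

variable {p : (∀ i, α i) → ℝ} {A B C : Finset ι}

theorem CondIndep.mul_eq (hp : ∀ w, 0 ≤ p w) (h : CondIndep p A B C) (x : ∀ i, α i) :
    margProb p (A ∪ B ∪ C) x * margProb p C x =
      margProb p (A ∪ C) x * margProb p (B ∪ C) x := by
  rcases (margProb_nonneg hp C x).lt_or_eq with hC | hC
  · exact h x hC
  · have hAC : margProb p (A ∪ C) x = 0 :=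
      le_antisymm (hC ▸ margProb_anti hp Finset.subset_union_right x) (margProb_nonneg hp _ x)
    rw [← hC, hAC, mul_zero, zero_mul]

theorem CondIndep.of_insert (hp : ∀ w, 0 ≤ p w) {W : ι} (hWA : W ∉ A) (hWB : W ∉ B)
    (hWC : W ∉ C) (h : CondIndep p A (insert W B) C) : CondIndep p A B C := by
  intro x _
  have hWABC : W ∉ A ∪ B ∪ C := by simp [hWA, hWB, hWC]
  have hWBC : W ∉ B ∪ C := by simp [hWB, hWC]
  rw [margProb_eq_sum_insert hWABC, margProb_eq_sum_insert hWBC, Finset.sum_mul, Finset.mul_sum]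
  refine Finset.sum_congr rfl fun v _ => ?_
  have hv := h.mul_eq hp (Function.update x W v)
  simp only [Finset.union_insert, Finset.insert_union] at hv
  rwa [margProb_update_of_notMem hWC,
    margProb_update_of_notMem (by simp [hWA, hWC] : W ∉ A ∪ C)] at hv

theorem CondIndep.weak_union (hp : ∀ w, 0 ≤ p w) {W : ι} (hWA : W ∉ A) (hWB : W ∉ B)
    (hWC : W ∉ C) (h : CondIndep p A (insert W B) C) : CondIndep p A {W} (B ∪ C) := by
  intro x hBC
  have hC : 0 < margProb p C x := hBC.trans_le (margProb_anti hp Finset.subset_union_right x)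
  have hjoint := h.mul_eq hp x
  have hmarg := (h.of_insert hp hWA hWB hWC).mul_eq hp x
  simp only [← Finset.insert_eq, Finset.union_insert, Finset.insert_union, Finset.union_assoc]
    at hjoint hmarg ⊢
  refine mul_right_cancel₀ hC.ne' ?_
  linear_combination margProb p (B ∪ C) x * hjoint -
    margProb p (insert W (B ∪ C)) x * hmarg

end CondIndep

section MarkovBlanket

variable {p : (∀ i, α i) → ℝ} {y : ι} {S : Finset ι}

theorem markovBoundary_iff_minimal {M : Finset ι} :
    MarkovBoundary p y S M ↔ Minimal (MarkovBlanket p y S) M := by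
  rw [minimal_iff_forall_lt]; rfl

theorem markovBlanket_self : MarkovBlanket p y S S :=
  ⟨subset_rfl, fun _ _ => by rw [Finset.sdiff_self, Finset.union_empty, Finset.empty_union]⟩

theorem markovBlanket_erase {W : ι} (hW : W ∈ S) (h : CondIndep p {y} {W} (S.erase W)) :
    MarkovBlanket p y S (S.erase W) :=
  ⟨S.erase_subset W, by rwa [Finset.sdiff_erase_self hW]⟩

theorem MarkovBlanket.condIndep_erase (hp : ∀ w, 0 ≤ p w) (hyS : y ∉ S) {M : Finset ι}
    (hM : MarkovBlanket p y S M) {W : ι} (hWS : W ∈ S) (hWM : W ∉ M) :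
    CondIndep p {y} {W} (S.erase W) := by
  have hWSM : W ∈ S \ M := Finset.mem_sdiff.2 ⟨hWS, hWM⟩
  have h := hM.2
  rw [← Finset.insert_erase hWSM] at h
  have hWy : W ∉ ({y} : Finset ι) := by simpa using ne_of_mem_of_not_mem hWS hyS
  convert h.weak_union hp hWy (Finset.notMem_erase W _) hWM using 2
  ext i
  by_cases hiM : i ∈ M
  · simp [hiM, hM.1 hiM, ne_of_mem_of_not_mem hiM hWM]
  · simp [hiM]

theorem not_condIndep_erase_iff_forall_markovBlanket (hp : ∀ w, 0 ≤ p w) (hyS : y ∉ S)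
    {W : ι} (hWS : W ∈ S) :
    ¬ CondIndep p {y} {W} (S.erase W) ↔ ∀ M, MarkovBlanket p y S M → W ∈ M :=
  ⟨fun h _ hM => by_contra fun hWM => h (hM.condIndep_erase hp hyS hWS hWM),
    fun h hci => S.notMem_erase W (h _ (markovBlanket_erase hWS hci))⟩

end MarkovBlanket

variable [∀ i, Nonempty (α i)]

/-- Theorem 2: `Y` has a unique Markov boundary within `S` iff the set
`E` of essential variables is a Markov boundary of `Y` within `S`, equivalently iff
`Y ⊥ (S \ E) | E`. -/
theorem unique_markov_boundary_iff_essential_set_is_boundary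
    (p : (∀ i, α i) → ℝ) (hp : IsDist p)
    (y : ι) (S : Finset ι) (hyS : y ∉ S)
    (E : Finset ι)
    (hE : ∀ W, W ∈ E ↔ W ∈ S ∧ ¬ CondIndep p {y} {W} (S.erase W)) :
    ((∃! M, MarkovBoundary p y S M) ↔ MarkovBoundary p y S E) ∧
    ((∃! M, MarkovBoundary p y S M) ↔ CondIndep p {y} (S \ E) E) := by
  have hE_iInter : ∀ W, W ∈ E ↔ ∀ M, MarkovBlanket p y S M → W ∈ M := fun W => by
    by_cases hWS : W ∈ S
    · rw [hE, ← not_condIndep_erase_iff_forall_markovBlanket hp.1 hyS hWS, and_iff_right hWS]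
    · exact iff_of_false (fun h => hWS ((hE W).1 h).1) fun h => hWS (h S markovBlanket_self)
  have hunique : (∃! M, MarkovBoundary p y S M) ↔ MarkovBlanket p y S E := by
    simp only [markovBoundary_iff_minimal]
    exact existsUnique_minimal_iff_of_mem_iff_forall_mem hE_iInter
  have hES : E ⊆ S := fun W hW => ((hE W).1 hW).1
  rw [hunique, markovBoundary_iff_minimal, minimal_iff_of_mem_iff_forall_mem hE_iInter]
  exact ⟨Iff.rfl, and_iff_right hES⟩

end
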